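/- arXiv:2304.01530 — 3 statements merged into one kernel-verified Lean document; each statement's English description precedes it below -/
import Mathlib

section
/- Let A : ℂ^n → ℂ^{2n} be a ℂ-linear map. Identify ℂ^n with ℝ^{2n} as a real vector space. Then the real linear maps Re∘A : ℝ^{2n} → ℝ^{2n} and Im∘A : ℝ^{2n} → ℝ^{2n}, obtained by taking coordinatewise real parts, respectively coordinatewise imaginary parts, of A, have determinants of equal absolute value: |det(Re∘A)| = |det(Im∘A)|. -/
noncomputable section

/-- The standard identification of `ℝ^{2n}` with `ℂ^n` as real vector spaces:
`x ↦ (x_j + i·x_{n+j})_{j<n}`. -/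
def toCplx (n : ℕ) : (Fin (2 * n) → ℝ) →ₗ[ℝ] (Fin n → ℂ) :=
  LinearMap.pi fun j =>
    Complex.ofRealAm.toLinearMap ∘ₗ LinearMap.proj (⟨j.1, by have := j.isLt; omega⟩ : Fin (2 * n))
      + (Complex.I • Complex.ofRealAm.toLinearMap) ∘ₗ
          LinearMap.proj (⟨n + j.1, by have := j.isLt; omega⟩ : Fin (2 * n))

/-- The coordinatewise real part `Re∘A : ℝ^{2n} → ℝ^{2n}` of a `ℂ`-linear map
`A : ℂ^n → ℂ^{2n}`, with `ℂ^n` identified with `ℝ^{2n}` as a real vector space. -/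
def rePart (n : ℕ) (A : (Fin n → ℂ) →ₗ[ℂ] (Fin (2 * n) → ℂ)) :
    (Fin (2 * n) → ℝ) →ₗ[ℝ] (Fin (2 * n) → ℝ) :=
  LinearMap.pi fun k =>
    Complex.reLm ∘ₗ LinearMap.proj k ∘ₗ (A.restrictScalars ℝ) ∘ₗ toCplx n

/-- The coordinatewise imaginary part `Im∘A : ℝ^{2n} → ℝ^{2n}` of a `ℂ`-linear map
`A : ℂ^n → ℂ^{2n}`, with `ℂ^n` identified with `ℝ^{2n}` as a real vector space. -/
def imPart (n : ℕ) (A : (Fin n → ℂ) →ₗ[ℂ] (Fin (2 * n) → ℂ)) :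
    (Fin (2 * n) → ℝ) →ₗ[ℝ] (Fin (2 * n) → ℝ) :=
  LinearMap.pi fun k =>
    Complex.imLm ∘ₗ LinearMap.proj k ∘ₗ (A.restrictScalars ℝ) ∘ₗ toCplx n

/-- the real map corresponding to multiplication by `-i`. -/
def Jmap (n : ℕ) : (Fin (2 * n) → ℝ) →ₗ[ℝ] (Fin (2 * n) → ℝ) :=
  LinearMap.pi fun k =>
    if h : (k : ℕ) < n then LinearMap.proj (⟨n + k, by omega⟩ : Fin (2 * n))
    else -LinearMap.proj (⟨(k : ℕ) - n, by have := k.isLt; omega⟩ : Fin (2 * n))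

lemma toCplx_Jmap (n : ℕ) (x : Fin (2 * n) → ℝ) :
    toCplx n (Jmap n x) = -(Complex.I • toCplx n x) := by
  funext j
  have hj := j.isLt
  simp only [toCplx, Jmap, LinearMap.pi_apply, LinearMap.add_apply, LinearMap.comp_apply,
    LinearMap.proj_apply, LinearMap.smul_apply, Pi.neg_apply, Pi.smul_apply,
    AlgHom.toLinearMap_apply, Complex.ofRealAm_coe, smul_eq_mul]
  rw [dif_pos hj, dif_neg (by omega : ¬ (n + j.1 < n))]
  simp only [Nat.add_sub_cancel_left, LinearMap.neg_apply, LinearMap.proj_apply,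
    Complex.ofReal_neg]
  ring_nf
  rw [Complex.I_sq]
  ring

lemma imPart_eq (n : ℕ) (A : (Fin n → ℂ) →ₗ[ℂ] (Fin (2 * n) → ℂ)) :
    imPart n A = (rePart n A) ∘ₗ Jmap n := by
  apply LinearMap.ext; intro x
  funext k
  simp only [imPart, rePart, LinearMap.pi_apply, LinearMap.comp_apply, LinearMap.proj_apply,
    LinearMap.restrictScalars_apply, Complex.reLm_coe, Complex.imLm_coe]
  rw [toCplx_Jmap]
  rw [map_neg, map_smul]
  simp [Complex.smul_re]

lemma Jmap_sq (n : ℕ) : (Jmap n) ∘ₗ (Jmap n) = -LinearMap.id := by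
  apply LinearMap.ext; intro x
  funext k
  have hk := k.isLt
  simp only [Jmap, LinearMap.comp_apply, LinearMap.pi_apply, LinearMap.neg_apply,
    LinearMap.id_apply, Pi.neg_apply]
  by_cases h : (k : ℕ) < n
  · rw [dif_pos h, LinearMap.proj_apply, LinearMap.pi_apply,
      dif_neg (by simpa using (by omega : ¬ n + (k : ℕ) < n) :
        ¬ ((⟨n + k, by omega⟩ : Fin (2 * n)) : ℕ) < n)]
    simp only [LinearMap.neg_apply, LinearMap.proj_apply]
    rw [show (⟨n + ↑k - n, by omega⟩ : Fin (2 * n)) = k from Fin.ext (by simp)]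
  · rw [dif_neg h, LinearMap.neg_apply, LinearMap.proj_apply, LinearMap.pi_apply,
      dif_pos (by simpa using (by omega : (k : ℕ) - n < n) :
        ((⟨(k : ℕ) - n, by omega⟩ : Fin (2 * n)) : ℕ) < n)]
    simp only [LinearMap.proj_apply]
    rw [show (⟨n + ((k : ℕ) - n), by omega⟩ : Fin (2 * n)) = k from
      Fin.ext (by simpa using Nat.add_sub_cancel' (Nat.le_of_not_lt h))]

lemma abs_det_Jmap (n : ℕ) : |LinearMap.det (Jmap n)| = 1 := by
  have h1 : LinearMap.det ((Jmap n) ∘ₗ (Jmap n)) = 1 := by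
    rw [Jmap_sq]
    have : (-LinearMap.id : (Fin (2*n) → ℝ) →ₗ[ℝ] _) = (-1 : ℝ) • LinearMap.id := by
      ext x; simp
    rw [this, LinearMap.det_smul, LinearMap.det_id, mul_one]
    simp [Module.finrank_pi]
  rw [LinearMap.det_comp] at h1
  have h2 : |LinearMap.det (Jmap n)| * |LinearMap.det (Jmap n)| = 1 := by
    rw [← abs_mul, h1, abs_one]
  nlinarith [abs_nonneg (LinearMap.det (Jmap n))]

/-- For a `ℂ`-linear map `A : ℂ^n → ℂ^{2n}`, the real linear maps `Re∘A, Im∘A : ℝ^{2n} → ℝ^{2n}`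
have determinants of equal absolute value. -/
theorem abs_det_rePart_eq_abs_det_imPart
    (n : ℕ) (A : (Fin n → ℂ) →ₗ[ℂ] (Fin (2 * n) → ℂ)) :
    |LinearMap.det (rePart n A)| = |LinearMap.det (imPart n A)| := by
  rw [imPart_eq, LinearMap.det_comp, abs_mul, abs_det_Jmap, mul_one]
end
end

section
/- Let U ⊆ ℂ^n be open and let ψ : U → ℂ^{2n} be holomorphic. Write L = Re∘ψ : U → ℝ^{2n} and A = Im∘ψ : U → ℝ^{2n} for the coordinatewise real and imaginary parts of ψ. Suppose A is injective on U and its real derivative is invertible at every point of U (so A is a diffeomorphism onto its open image). Then the map L∘A^{-1} : A(U) → ℝ^{2n} preserves Lebesgue measure, in the sense that for every Borel set E ⊆ A(U), the Lebesgue measure of E equals the integral over E of the absolute value of the Jacobian determinant of L∘A^{-1}; equivalently, the pullback of Lebesgue measure under L∘A^{-1} equals Lebesgue measure on A(U). -/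
open MeasureTheory
open scoped ENNReal

noncomputable section

open Metric Asymptotics in
theorem my_strict {E F : Type*} [NormedAddCommGroup E] [NormedSpace ℂ E]
    [NormedAddCommGroup F] [NormedSpace ℂ F] {f : E → F} {U : Set E}
    (hU : IsOpen U) (hf : DifferentiableOn ℂ f U) {a : E} (ha : a ∈ U) :
    HasStrictFDerivAt f (fderiv ℂ f a) a := by
  set f' := fderiv ℂ f a with hf'def
  have hfa : HasFDerivAt f f' a := (hf.differentiableAt (hU.mem_nhds ha)).hasFDerivAt
  set g : E → F := fun x => f x - f' x with hgdef
  have hgd : ∀ x ∈ U, HasFDerivAt g (fderiv ℂ f x - f') x := fun x hx =>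
    ((hf.differentiableAt (hU.mem_nhds hx)).hasFDerivAt).sub f'.hasFDerivAt
  rw [hasStrictFDerivAt_iff_isLittleO]
  rw [isLittleO_iff]
  intro c hc
  set ε : ℝ := c / 4 with hεdef
  have hε : 0 < ε := by positivity
  -- smallness of g near a from differentiability at a
  have hsmall : ∀ᶠ w in nhds a, ‖g w - g a‖ ≤ ε * ‖w - a‖ := by
    have := isLittleO_iff.1 hfa.isLittleO hε
    filter_upwards [this] with w hw
    have : g w - g a = f w - f a - f' (w - a) := by
      simp only [hgdef, map_sub]; abel
    rw [this]; exact hw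
  obtain ⟨r0, hr0, hball0⟩ := Metric.eventually_nhds_iff_ball.1 hsmall
  obtain ⟨r1, hr1, hball1⟩ := Metric.mem_nhds_iff.1 (hU.mem_nhds ha)
  set r : ℝ := min r0 r1 / 3 with hrdef
  have hr : 0 < r := by positivity
  have h3r : ball a (3 * r) ⊆ U := by
    intro x hx
    apply hball1
    apply ball_subset_ball (show 3 * r ≤ r1 by
      have : 3 * r = min r0 r1 := by rw [hrdef]; ring
      rw [this]; exact min_le_right _ _) hx
  have h3r0 : 3 * r ≤ r0 := by
    have : 3 * r = min r0 r1 := by rw [hrdef]; ring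
    rw [this]; exact min_le_left _ _
  have hga : ∀ w ∈ ball a (3*r), ‖g w - g a‖ ≤ ε * ‖w - a‖ := by
    intro w hw
    exact hball0 w (ball_subset_ball h3r0 hw)
  have hbound : ∀ w ∈ ball a r, ‖fderiv ℂ f w - f'‖ ≤ 4 * ε := by
    intro w hw
    apply ContinuousLinearMap.opNorm_le_bound _ (by positivity)
    intro v
    rcases eq_or_ne v 0 with rfl|hv
    · simp
    have hvn : 0 < ‖v‖ := norm_pos_iff.2 hv
    set h : ℂ → F := fun t => g (w + t • v) with hhdef
    have hwmem : w ∈ ball a (3 * r) := ball_subset_ball (by linarith) hw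
    have hmap : ∀ t ∈ ball (0:ℂ) (r / ‖v‖), w + t • v ∈ ball a (3 * r) := by
      intro t ht
      rw [mem_ball, dist_eq_norm] at ht ⊢
      have hw' : ‖w - a‖ < r := by rw [mem_ball, dist_eq_norm] at hw; exact hw
      have htv : ‖t • v‖ < r := by
        rw [norm_smul]
        calc ‖t‖ * ‖v‖ < (r / ‖v‖) * ‖v‖ := by
              apply mul_lt_mul_of_pos_right _ hvn
              simpa using ht
          _ = r := by field_simp
      calc ‖w + t • v - a‖ ≤ ‖w - a‖ + ‖t • v‖ := by
            have h9 : w + t • v - a = (w - a) + t • v := by abel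
            rw [h9]; exact norm_add_le _ _
        _ < 3 * r := by linarith
    have hd : DifferentiableOn ℂ h (ball (0:ℂ) (r / ‖v‖)) := by
      intro t ht
      have : DifferentiableAt ℂ h t := by
        have h2 := (hgd _ (h3r (hmap t ht))).differentiableAt
        have h1 : DifferentiableAt ℂ (fun t : ℂ => w + t • v) t :=
          (differentiableAt_id.smul_const v).const_add w
        exact h2.comp t h1
      exact this.differentiableWithinAt
    have hderivh : HasDerivAt h ((fderiv ℂ f w - f') v) 0 := by
      have h1 : HasDerivAt (fun t : ℂ => w + t • v) v 0 := by
        simpa using ((hasDerivAt_id (0:ℂ)).smul_const v).const_add w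
      have h2 : HasFDerivAt g (fderiv ℂ f w - f') (w + (0:ℂ) • v) := by
        simpa using hgd w (h3r hwmem)
      have h3 := h2.comp_hasDerivAt 0 h1
      simp at h3
      exact h3
    have hmaps : Set.MapsTo h (ball (0:ℂ) (r/‖v‖)) (ball (h 0) (4*ε*r)) := by
      intro t ht
      rw [mem_ball, dist_eq_norm]
      have e1 : ‖g (w + t • v) - g a‖ ≤ ε * ‖w + t • v - a‖ := hga _ (hmap t ht)
      have e2 : ‖g w - g a‖ ≤ ε * ‖w - a‖ := hga _ hwmem
      have hw' : ‖w - a‖ < r := by rw [mem_ball, dist_eq_norm] at hw; exact hw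
      have htv : ‖t • v‖ < r := by
        rw [norm_smul]
        calc ‖t‖ * ‖v‖ < (r / ‖v‖) * ‖v‖ := by
              apply mul_lt_mul_of_pos_right _ hvn
              simpa [dist_eq_norm] using ht
          _ = r := by field_simp
      have hb1 : ‖w + t • v - a‖ ≤ 2 * r := by
        calc ‖w + t • v - a‖ ≤ ‖w - a‖ + ‖t • v‖ := by
              have h9 : w + t • v - a = (w - a) + t • v := by abel
              rw [h9]; exact norm_add_le _ _
          _ ≤ 2 * r := by linarith
      have hb2 : ‖w - a‖ ≤ r := hw'.le
      have hh0 : h 0 = g w := by simp [hhdef]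
      calc ‖h t - h 0‖ = ‖(g (w + t • v) - g a) - (g w - g a)‖ := by
            rw [hh0]; simp only [hhdef]; congr 1; abel
        _ ≤ ‖g (w + t • v) - g a‖ + ‖g w - g a‖ := norm_sub_le _ _
        _ ≤ ε * (2 * r) + ε * r := by
            refine add_le_add (le_trans e1 ?_) (le_trans e2 ?_)
            · exact mul_le_mul_of_nonneg_left hb1 hε.le
            · exact mul_le_mul_of_nonneg_left hb2 hε.le
        _ < 4 * ε * r := by nlinarith
    have hschwarz := Complex.norm_deriv_le_div_of_mapsTo_ball hd (hmaps.mono_right ball_subset_closedBall) (by positivity)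
    rw [hderivh.deriv] at hschwarz
    calc ‖(fderiv ℂ f w - f') v‖ ≤ 4 * ε * r / (r / ‖v‖) := hschwarz
      _ = 4 * ε * ‖v‖ := by field_simp
  have hmv : ∀ x ∈ ball a r, ∀ y ∈ ball a r, ‖g y - g x‖ ≤ (4*ε) * ‖y - x‖ := by
    intro x hx y hy
    refine Convex.norm_image_sub_le_of_norm_hasFDerivWithin_le
      (fun w hw => (hgd w (h3r (ball_subset_ball (by linarith) hw))).hasFDerivWithinAt)
      (fun w hw => hbound w hw) (convex_ball a r) hx hy
  have hnb : ball a r ×ˢ ball a r ∈ nhds (a, a) :=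
    prod_mem_nhds (ball_mem_nhds a hr) (ball_mem_nhds a hr)
  filter_upwards [hnb] with p hp
  have hm := hmv p.2 hp.2 p.1 hp.1
  have he : g p.1 - g p.2 = f p.1 - f p.2 - f' (p.1 - p.2) := by
    simp only [hgdef, map_sub]; abel
  rw [he] at hm
  calc ‖f p.1 - f p.2 - f' (p.1 - p.2)‖ ≤ (4*ε) * ‖p.1 - p.2‖ := hm
    _ = c * ‖p.1 - p.2‖ := by rw [hεdef]; ring

/-- **Mikhalkin's volume-preservation lemma, in a local holomorphic chart.**
Let `ψ : U → ℂ^{2n}` be holomorphic on an open set `U ⊆ ℂ^n` and let `L = Re∘ψ` and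
`A = Im∘ψ` be its coordinatewise real and imaginary parts. If `A` is injective on `U` with
invertible real derivative at every point of `U`, then `L∘A⁻¹ : A(U) → ℝ^{2n}` preserves
Lebesgue measure: for every Borel set `E ⊆ A(U)`, the measure of `E` equals the integral
over `E` of the absolute value of the Jacobian determinant of `L∘A⁻¹`. -/
theorem log_comp_argPi_inverse_volume_preserving
    (n : ℕ) (U : Set (Fin n → ℂ)) (hU : IsOpen U)
    (ψ : (Fin n → ℂ) → (Fin (2 * n) → ℂ)) (hψ : DifferentiableOn ℂ ψ U)
    (L A : (Fin n → ℂ) → (Fin (2 * n) → ℝ))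
    (hL : ∀ z k, L z k = (ψ z k).re) (hA : ∀ z k, A z k = (ψ z k).im)
    (hinj : Set.InjOn A U)
    (hder : ∀ z ∈ U, Function.Bijective (fderiv ℝ A z))
    (g : (Fin (2 * n) → ℝ) → (Fin (2 * n) → ℝ))
    (hg : ∀ θ ∈ A '' U, g θ = L (Function.invFunOn A U θ)) :
    ∀ E ⊆ A '' U, MeasurableSet E →
      volume E = ∫⁻ θ in E, ENNReal.ofReal |(fderiv ℝ g θ).det| := by
  classical
  intro E hEsub hEmeas
  set imP : (Fin (2*n) → ℂ) →L[ℝ] (Fin (2*n) → ℝ) :=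
    ContinuousLinearMap.pi (fun k => Complex.imCLM.comp (ContinuousLinearMap.proj k)) with himP
  set reP : (Fin (2*n) → ℂ) →L[ℝ] (Fin (2*n) → ℝ) :=
    ContinuousLinearMap.pi (fun k => Complex.reCLM.comp (ContinuousLinearMap.proj k)) with hreP
  have hAfun : A = fun z => imP (ψ z) := by
    funext z; funext k; simp [hA, himP]
  have hLfun : L = fun z => reP (ψ z) := by
    funext z; funext k; simp [hL, hreP]
  have key : ∀ z ∈ U, |(fderiv ℝ g (A z)).det| = 1 := by
    intro z hz
    have hψs : HasStrictFDerivAt ψ (fderiv ℂ ψ z) z := my_strict hU hψ hz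
    set Dc := fderiv ℂ ψ z with hDc
    set Dψ : (Fin n → ℂ) →L[ℝ] (Fin (2*n) → ℂ) := Dc.restrictScalars ℝ with hDψ
    have hψsR : HasStrictFDerivAt ψ Dψ z := hψs.restrictScalars ℝ
    have hAs : HasStrictFDerivAt A (imP.comp Dψ) z := by
      rw [hAfun]; exact imP.hasStrictFDerivAt.comp z hψsR
    have hLs : HasFDerivAt L (reP.comp Dψ) z := by
      rw [hLfun]; exact reP.hasFDerivAt.comp z hψsR.hasFDerivAt
    have hAf : fderiv ℝ A z = imP.comp Dψ := hAs.hasFDerivAt.fderiv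
    have hbij : Function.Bijective (imP.comp Dψ) := by rw [← hAf]; exact hder z hz
    set eL : (Fin n → ℂ) ≃ₗ[ℝ] (Fin (2*n) → ℝ) :=
      LinearEquiv.ofBijective (imP.comp Dψ).toLinearMap hbij with heL
    set e : (Fin n → ℂ) ≃L[ℝ] (Fin (2*n) → ℝ) := eL.toContinuousLinearEquiv with he
    have hecoe : (e : (Fin n → ℂ) →L[ℝ] (Fin (2*n) → ℝ)) = imP.comp Dψ := by
      ext v; rfl
    have hAe : HasStrictFDerivAt A (e : (Fin n → ℂ) →L[ℝ] (Fin (2*n) → ℝ)) z := by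
      rw [hecoe]; exact hAs
    set finv := hAe.localInverse A e z with hfinv
    have hev : ∀ᶠ θ' in nhds (A z), A (finv θ') = θ' := hAe.eventually_right_inverse
    have hfim : finv (A z) = z := hAe.localInverse_apply_image
    have hmemU : ∀ᶠ θ' in nhds (A z), finv θ' ∈ U := by
      have hn : U ∈ nhds (finv (A z)) := by rw [hfim]; exact hU.mem_nhds hz
      exact hAe.localInverse_continuousAt.eventually_mem hn
    have heq : g =ᶠ[nhds (A z)] fun θ' => L (finv θ') := by
      filter_upwards [hev, hmemU] with θ' h1 h2
      have himg : θ' ∈ A '' U := ⟨finv θ', h2, h1⟩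
      rw [hg θ' himg]
      have hiv : Function.invFunOn A U θ' = finv θ' :=
        hinj (Function.invFunOn_mem himg) h2 (by rw [Function.invFunOn_eq himg, h1])
      rw [hiv]
    have hinvd : HasStrictFDerivAt finv
        (e.symm : (Fin (2*n) → ℝ) →L[ℝ] (Fin n → ℂ)) (A z) := hAe.to_localInverse
    have hLz' : HasFDerivAt L (reP.comp Dψ) (finv (A z)) := by rw [hfim]; exact hLs
    have hgd : HasFDerivAt g ((reP.comp Dψ).comp
        (e.symm : (Fin (2*n) → ℝ) →L[ℝ] (Fin n → ℂ))) (A z) :=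
      (hLz'.comp (A z) hinvd.hasFDerivAt).congr_of_eventuallyEq heq
    have hgf : fderiv ℝ g (A z) = (reP.comp Dψ).comp
        (e.symm : (Fin (2*n) → ℝ) →L[ℝ] (Fin n → ℂ)) := hgd.fderiv
    -- the rotation J
    set J : (Fin n → ℂ) →L[ℝ] (Fin n → ℂ) :=
      (Complex.I • ContinuousLinearMap.id ℂ (Fin n → ℂ)).restrictScalars ℝ with hJ
    have hLA : reP.comp Dψ = (imP.comp Dψ).comp J := by
      refine ContinuousLinearMap.ext fun v => funext fun k => ?_
      have hsm : Dc (Complex.I • v) = Complex.I • Dc v := map_smul Dc _ _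
      simp [hreP, himP, hJ, hDψ, hsm, Complex.mul_im]
    have hgf2 : fderiv ℝ g (A z) = ((e : (Fin n → ℂ) →L[ℝ] (Fin (2*n) → ℝ)).comp J).comp
        (e.symm : (Fin (2*n) → ℝ) →L[ℝ] (Fin n → ℂ)) := by
      rw [hgf, hLA, hecoe]
    have hdet : (fderiv ℝ g (A z)).det = LinearMap.det (J : (Fin n → ℂ) →ₗ[ℝ] (Fin n → ℂ)) := by
      rw [hgf2]
      have h1 : ((((e : (Fin n → ℂ) →L[ℝ] (Fin (2*n) → ℝ)).comp J).comp
          (e.symm : (Fin (2*n) → ℝ) →L[ℝ] (Fin n → ℂ))) :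
            (Fin (2*n) → ℝ) →ₗ[ℝ] (Fin (2*n) → ℝ))
          = (eL : (Fin n → ℂ) →ₗ[ℝ] (Fin (2*n) → ℝ)) ∘ₗ
            ((J : (Fin n → ℂ) →ₗ[ℝ] (Fin n → ℂ)) ∘ₗ
              (eL.symm : (Fin (2*n) → ℝ) →ₗ[ℝ] (Fin n → ℂ))) := by
        rfl
      show LinearMap.det _ = _
      rw [h1]
      exact LinearMap.det_conj _ eL
    -- |det J| = 1
    have hJJ : (J : (Fin n → ℂ) →ₗ[ℝ] (Fin n → ℂ)) ∘ₗ (J : (Fin n → ℂ) →ₗ[ℝ] (Fin n → ℂ))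
        = -LinearMap.id := by
      refine LinearMap.ext fun v => ?_
      show Complex.I • (Complex.I • v) = -v
      rw [smul_smul, Complex.I_mul_I, neg_one_smul]
    have hfr : Module.finrank ℝ (Fin n → ℂ) = 2 * n := by
      simp [Module.finrank_pi_fintype, Complex.finrank_real_complex, Finset.sum_const,
        mul_comm]
    have hJdet : LinearMap.det (J : (Fin n → ℂ) →ₗ[ℝ] (Fin n → ℂ)) *
        LinearMap.det (J : (Fin n → ℂ) →ₗ[ℝ] (Fin n → ℂ)) = 1 := by
      rw [← LinearMap.det_comp, hJJ, ← neg_one_smul ℝ (LinearMap.id :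
        (Fin n → ℂ) →ₗ[ℝ] (Fin n → ℂ)), LinearMap.det_smul, LinearMap.det_id, mul_one, hfr]
      exact (even_two_mul n).neg_one_pow
    rw [hdet]
    rcases mul_self_eq_one_iff.mp hJdet with h|h <;> rw [h] <;> norm_num
  have hRHS : ∫⁻ θ in E, ENNReal.ofReal |(fderiv ℝ g θ).det| = ∫⁻ θ in E, 1 := by
    apply setLIntegral_congr_fun hEmeas
    intro θ hθ
    obtain ⟨z, hz, rfl⟩ := hEsub hθ
    simp only [key z hz]
    norm_num
  rw [hRHS, setLIntegral_one]
end
end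

section
/- Let U ⊆ ℂ^n be open and let ψ : U → ℂ^{2n} be holomorphic and injective. Write L = Re∘ψ : U → ℝ^{2n} and A = Im∘ψ : U → ℝ^{2n} for the coordinatewise real and imaginary parts of ψ. Then the fiber-counting integrals of L and A agree: ∫_{ℝ^{2n}} #{u ∈ U : L(u) = y} dy = ∫_{ℝ^{2n}} #{u ∈ U : A(u) = θ} dθ, where both integrals are with respect to Lebesgue measure on ℝ^{2n} and the cardinalities take values in [0,∞]. -/
open MeasureTheory Set
open scoped ENNReal NNReal

noncomputable section

lemma aux_encard_iUnion {α : Type*} {t : ℕ → Set α} (hd : Pairwise (Function.onFun Disjoint t)) :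
    (((⋃ i, t i).encard : ℕ∞) : ℝ≥0∞) = ∑' i, ((t i).encard : ℝ≥0∞) := by
  calc (((⋃ i, t i).encard : ℕ∞) : ℝ≥0∞) = ∑' (_ : ↥(⋃ i, t i)), (1 : ℝ≥0∞) :=
        (ENNReal.tsum_set_one _).symm
    _ = ∑' (_ : Σ i, ↥(t i)), (1 : ℝ≥0∞) :=
        (Set.unionEqSigmaOfDisjoint hd).tsum_eq (fun _ => (1:ℝ≥0∞))
    _ = ∑' i, ∑' (_ : ↥(t i)), (1 : ℝ≥0∞) := ENNReal.tsum_sigma (fun _ _ => (1:ℝ≥0∞))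
    _ = ∑' i, ((t i).encard : ℝ≥0∞) := by simp

lemma aux_encard_fiber {α β : Type*} {s : Set α} {f : α → β} (hinj : Set.InjOn f s) (y : β) :
    (({x ∈ s | f x = y}).encard : ℝ≥0∞) = (f '' s).indicator 1 y := by
  by_cases hy : y ∈ f '' s
  · obtain ⟨a, ha, rfl⟩ := hy
    have h1 : {x ∈ s | f x = f a} = {a} := by
      ext b
      simp only [Set.mem_setOf_eq, Set.mem_singleton_iff]
      exact ⟨fun ⟨hb, hfb⟩ => hinj hb ha hfb, fun h => by subst h; exact ⟨ha, rfl⟩⟩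
    rw [h1]
    simp [Set.indicator_of_mem, Set.mem_image_of_mem _ ha]
  · have h0 : {x ∈ s | f x = y} = ∅ := by
      ext b
      simp only [Set.mem_setOf_eq, Set.mem_empty_iff_false, iff_false, not_and]
      intro hb hfb
      exact hy ⟨b, hb, hfb⟩
    simp [h0, Set.indicator_of_notMem hy]

lemma aux_area_formula (m : ℕ) (V : Set (Fin m → ℝ)) (hV : IsOpen V)
    (f : (Fin m → ℝ) → (Fin m → ℝ)) (f' : (Fin m → ℝ) → ((Fin m → ℝ) →L[ℝ] (Fin m → ℝ)))
    (hd : ∀ x ∈ V, HasFDerivAt f (f' x) x) :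
    ∫⁻ y, (({x ∈ V | f x = y}).encard : ℝ≥0∞) ∂volume
      = ∫⁻ x in V, ENNReal.ofReal |(f' x).det| ∂volume := by
  classical
  -- the critical set
  set C : Set (Fin m → ℝ) := {x ∈ V | (fderiv ℝ f x).det = 0} with hC
  have hfd_eq : ∀ x ∈ V, fderiv ℝ f x = f' x := fun x hx => (hd x hx).fderiv
  have hCmeas : MeasurableSet C := by
    have : C = V ∩ (fun x => (fderiv ℝ f x).det) ⁻¹' {0} := by
      ext x; simp [hC, Set.mem_setOf_eq]
    rw [this]
    exact hV.measurableSet.inter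
      ((ContinuousLinearMap.continuous_det.measurable.comp (measurable_fderiv ℝ f))
        (measurableSet_singleton 0))
  have hCdet : ∀ x ∈ C, (f' x).det = 0 := fun x hx => by
    rw [← hfd_eq x hx.1]; exact hx.2
  set G : Set (Fin m → ℝ) := V \ C with hG
  have hGmeas : MeasurableSet G := hV.measurableSet.diff hCmeas
  have hGV : G ⊆ V := Set.diff_subset
  -- partition of G with linear approximation and local injectivity
  set R : ((Fin m → ℝ) →L[ℝ] (Fin m → ℝ)) → ℝ≥0 := fun A =>
    if h : ∃ B : (Fin m → ℝ) ≃L[ℝ] (Fin m → ℝ), (B : (Fin m → ℝ) →L[ℝ] (Fin m → ℝ)) = A then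
      (if ‖((Classical.choose h).symm : (Fin m → ℝ) →L[ℝ] (Fin m → ℝ))‖₊ = 0 then 1
        else (2 * ‖((Classical.choose h).symm : (Fin m → ℝ) →L[ℝ] (Fin m → ℝ))‖₊)⁻¹)
    else 1 with hR
  have hRpos : ∀ A, R A ≠ 0 := by
    intro A
    rw [hR]
    dsimp only
    split_ifs with h1 h2
    · exact one_ne_zero
    · simp only [ne_eq, inv_eq_zero]
      intro hcon
      rcases mul_eq_zero.1 hcon with h | h
      · norm_num at h
      · exact h2 h
    · exact one_ne_zero
  obtain ⟨t, A, htdisj0, htmeas0, hGsub, happrox, hAder⟩ :=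
    exists_partition_approximatesLinearOn_of_hasFDerivWithinAt f G f'
      (fun x hx => ((hd x (hGV hx)).hasFDerivWithinAt)) R hRpos
  set t' : ℕ → Set (Fin m → ℝ) := fun k => G ∩ t k with ht'
  have htmeas : ∀ k, MeasurableSet (t' k) := fun k => hGmeas.inter (htmeas0 k)
  have htdisj : Pairwise (Function.onFun Disjoint t') := fun i j hij =>
    ((htdisj0 hij).mono inf_le_right inf_le_right)
  have htG : ∀ k, t' k ⊆ G := fun k => Set.inter_subset_left
  have htV : ∀ k, t' k ⊆ V := fun k => (htG k).trans hGV
  have htunion : (⋃ k, t' k) = G := by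
    rw [ht', ← Set.inter_iUnion]
    exact Set.inter_eq_left.2 hGsub
  have htinj : ∀ k, Set.InjOn f (t' k) := by
    intro k
    rcases Set.eq_empty_or_nonempty G with hGe | hGne
    · have : t' k = ∅ := Set.subset_eq_empty (htG k) hGe
      rw [this]
      exact Set.injOn_empty f
    · obtain ⟨y, hyG, hAy⟩ := hAder hGne k
      have hydet : (fderiv ℝ f y).det ≠ 0 := fun h => hyG.2 ⟨hyG.1, h⟩
      have hdet : LinearMap.det ((A k) : (Fin m → ℝ) →ₗ[ℝ] (Fin m → ℝ)) ≠ 0 := by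
        rw [hAy, ← hfd_eq y hyG.1]
        exact hydet
      set Φ : (Fin m → ℝ) ≃ₗ[ℝ] (Fin m → ℝ) :=
        LinearMap.equivOfDetNeZero ((A k) : (Fin m → ℝ) →ₗ[ℝ] (Fin m → ℝ)) hdet with hΦ
      set B : (Fin m → ℝ) ≃L[ℝ] (Fin m → ℝ) := Φ.toContinuousLinearEquiv with hB
      have hBcoe : (B : (Fin m → ℝ) →L[ℝ] (Fin m → ℝ)) = A k := by
        refine ContinuousLinearMap.ext fun v => ?_
        have h1 : B v = Φ v := congrFun (LinearEquiv.coe_toContinuousLinearEquiv' Φ) v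
        have h2 : Φ v = A k v := by
          rw [hΦ]; exact LinearEquiv.ofIsUnitDet_apply _ v
        calc ((B : (Fin m → ℝ) →L[ℝ] (Fin m → ℝ)) v) = B v := rfl
          _ = A k v := h1.trans h2
      have hex : ∃ B' : (Fin m → ℝ) ≃L[ℝ] (Fin m → ℝ),
          (B' : (Fin m → ℝ) →L[ℝ] (Fin m → ℝ)) = A k := ⟨B, hBcoe⟩
      have hch : Classical.choose hex = B := by
        have h1 : ((Classical.choose hex : (Fin m → ℝ) ≃L[ℝ] (Fin m → ℝ)) :
            (Fin m → ℝ) →L[ℝ] (Fin m → ℝ)) = (B : (Fin m → ℝ) →L[ℝ] (Fin m → ℝ)) :=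
          (Classical.choose_spec hex).trans hBcoe.symm
        refine ContinuousLinearEquiv.ext (funext fun v => ?_)
        exact congrFun (congrArg (DFunLike.coe) h1) v
      have happ : ApproximatesLinearOn f (B : (Fin m → ℝ) →L[ℝ] (Fin m → ℝ))
          (t' k) (R (A k)) := by
        rw [hBcoe]
        exact (happrox k)
      refine happ.injOn ?_
      by_cases hz : ‖((B).symm : (Fin m → ℝ) →L[ℝ] (Fin m → ℝ))‖₊ = 0
      · left
        have hz' : ((B).symm : (Fin m → ℝ) →L[ℝ] (Fin m → ℝ)) = 0 := by
          rwa [← nnnorm_eq_zero]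
        refine ⟨fun a b => ?_⟩
        have ha : a = B.symm (B a) := (B.symm_apply_apply a).symm
        have hb : b = B.symm (B b) := (B.symm_apply_apply b).symm
        rw [ha, hb]
        show ((B).symm : (Fin m → ℝ) →L[ℝ] (Fin m → ℝ)) (B a)
          = ((B).symm : (Fin m → ℝ) →L[ℝ] (Fin m → ℝ)) (B b)
        rw [hz']
        simp
      · right
        have hRval : R (A k) = (2 * ‖((B).symm : (Fin m → ℝ) →L[ℝ] (Fin m → ℝ))‖₊)⁻¹ := by
          rw [hR]
          dsimp only
          rw [dif_pos hex, hch, if_neg hz]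
        rw [hRval]
        refine NNReal.inv_lt_inv hz ?_
        have hpos : 0 < ‖((B).symm : (Fin m → ℝ) →L[ℝ] (Fin m → ℝ))‖₊ := pos_iff_ne_zero.2 hz
        calc ‖((B).symm : (Fin m → ℝ) →L[ℝ] (Fin m → ℝ))‖₊
            = 1 * ‖((B).symm : (Fin m → ℝ) →L[ℝ] (Fin m → ℝ))‖₊ := (one_mul _).symm
          _ < 2 * ‖((B).symm : (Fin m → ℝ) →L[ℝ] (Fin m → ℝ))‖₊ := by
              exact mul_lt_mul_of_pos_right one_lt_two hpos
  -- the image of the critical set is null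
  have hCV : C ⊆ V := fun x hx => hx.1
  have hCzero : ∫⁻ x in C, ENNReal.ofReal |(f' x).det| ∂volume = 0 := by
    calc ∫⁻ x in C, ENNReal.ofReal |(f' x).det| ∂volume
        = ∫⁻ _ in C, (0 : ℝ≥0∞) ∂volume := setLIntegral_congr_fun hCmeas
          (fun x hx => by rw [hCdet x hx]; simp)
      _ = 0 := by simp
  have hCnull : volume (f '' C) = 0 := by
    refine le_antisymm ?_ zero_le
    rw [← hCzero]
    exact addHaar_image_le_lintegral_abs_det_fderiv volume hCmeas
      (fun x hx => (hd x (hCV hx)).hasFDerivWithinAt)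
  obtain ⟨N, hNsub, hNmeas, hNnull⟩ := exists_measurable_superset_of_null hCnull
  have hcont : ContinuousOn f V := fun x hx =>
    ((hd x hx).continuousAt).continuousWithinAt
  have himg : ∀ k, MeasurableSet (f '' t' k) := fun k =>
    (htmeas k).image_of_continuousOn_injOn (hcont.mono (htV k)) (htinj k)
  -- pointwise fiber decomposition
  have hfib : ∀ y, (({x ∈ V | f x = y}).encard : ℝ≥0∞)
      = (∑' k, (f '' t' k).indicator 1 y) + (({x ∈ C | f x = y}).encard : ℝ≥0∞) := by
    intro y
    have hsplit : {x ∈ V | f x = y} = (⋃ k, {x ∈ t' k | f x = y}) ∪ {x ∈ C | f x = y} := by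
      ext x
      constructor
      · rintro ⟨hxV, hfx⟩
        by_cases hxC : x ∈ C
        · exact Or.inr ⟨hxC, hfx⟩
        · have hxG : x ∈ G := ⟨hxV, hxC⟩
          rw [← htunion] at hxG
          rcases Set.mem_iUnion.1 hxG with ⟨k, hk⟩
          exact Or.inl (Set.mem_iUnion.2 ⟨k, hk, hfx⟩)
      · rintro (h | h)
        · rcases Set.mem_iUnion.1 h with ⟨k, hk, hfx⟩
          exact ⟨htV k hk, hfx⟩
        · exact ⟨hCV h.1, h.2⟩
    have hdisj : Disjoint (⋃ k, {x ∈ t' k | f x = y}) {x ∈ C | f x = y} := by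
      refine Set.disjoint_left.2 ?_
      intro x hx hxC
      rcases Set.mem_iUnion.1 hx with ⟨k, hk, _⟩
      have hxG : x ∈ G := htG k hk
      exact hxG.2 hxC.1
    rw [hsplit, Set.encard_union_eq hdisj, ENat.toENNReal_add]
    congr 1
    have hd2 : Pairwise (Function.onFun Disjoint fun k => {x ∈ t' k | f x = y}) := by
      intro i j hij
      exact Set.disjoint_of_subset (fun x hx => hx.1) (fun x hx => hx.1) (htdisj hij)
    rw [aux_encard_iUnion hd2]
    exact tsum_congr fun k => aux_encard_fiber (htinj k) y
  -- the function counting fibers in G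
  set F : (Fin m → ℝ) → ℝ≥0∞ := fun y => ∑' k, (f '' t' k).indicator 1 y with hF
  have hFmeas : Measurable F :=
    Measurable.ennreal_tsum (fun k => (measurable_one.indicator (himg k)))
  have hNind : ∫⁻ y, N.indicator (fun _ => (⊤ : ℝ≥0∞)) y ∂volume = 0 := by
    rw [lintegral_indicator_const hNmeas, hNnull, mul_zero]
  have hFeq : ∫⁻ y, (({x ∈ V | f x = y}).encard : ℝ≥0∞) ∂volume = ∫⁻ y, F y ∂volume := by
    refine le_antisymm ?_ ?_
    · have hle : ∀ y, (({x ∈ V | f x = y}).encard : ℝ≥0∞)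
          ≤ F y + N.indicator (fun _ => (⊤ : ℝ≥0∞)) y := by
        intro y
        rw [hfib y]
        refine add_le_add le_rfl ?_
        by_cases hy : y ∈ N
        · simp [Set.indicator_of_mem hy]
        · have h0 : {x ∈ C | f x = y} = ∅ := by
            ext x
            simp only [Set.mem_setOf_eq, Set.mem_empty_iff_false, iff_false, not_and]
            intro hx hfx
            exact hy (hNsub ⟨x, hx, hfx⟩)
          simp [h0, Set.indicator_of_notMem hy]
      calc ∫⁻ y, (({x ∈ V | f x = y}).encard : ℝ≥0∞) ∂volume
          ≤ ∫⁻ y, (F y + N.indicator (fun _ => (⊤ : ℝ≥0∞)) y) ∂volume := lintegral_mono hle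
        _ = ∫⁻ y, F y ∂volume + ∫⁻ y, N.indicator (fun _ => (⊤ : ℝ≥0∞)) y ∂volume :=
            lintegral_add_right _ (measurable_const.indicator hNmeas)
        _ = ∫⁻ y, F y ∂volume := by rw [hNind, add_zero]
    · refine lintegral_mono fun y => ?_
      rw [hfib y]
      exact le_add_right le_rfl
  have hFval : ∫⁻ y, F y ∂volume = ∫⁻ x in G, ENNReal.ofReal |(f' x).det| ∂volume := by
    calc ∫⁻ y, F y ∂volume = ∑' k, ∫⁻ y, (f '' t' k).indicator 1 y ∂volume :=
          lintegral_tsum (fun k => (measurable_one.indicator (himg k)).aemeasurable)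
      _ = ∑' k, volume (f '' t' k) := by
          refine tsum_congr fun k => ?_
          rw [lintegral_indicator_one (himg k)]
      _ = ∑' k, ∫⁻ x in t' k, ENNReal.ofReal |(f' x).det| ∂volume := by
          refine tsum_congr fun k => ?_
          exact (lintegral_abs_det_fderiv_eq_addHaar_image volume (htmeas k)
            (fun x hx => (hd x (htV k hx)).hasFDerivWithinAt) (htinj k)).symm
      _ = ∫⁻ x in ⋃ k, t' k, ENNReal.ofReal |(f' x).det| ∂volume :=
          (lintegral_iUnion htmeas htdisj _).symm
      _ = ∫⁻ x in G, ENNReal.ofReal |(f' x).det| ∂volume := by rw [htunion]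
  have hVsplit : ∫⁻ x in V, ENNReal.ofReal |(f' x).det| ∂volume
      = ∫⁻ x in G, ENNReal.ofReal |(f' x).det| ∂volume := by
    have hVGC : G ∪ C = V := by
      rw [hG, Set.diff_union_of_subset hCV]
    rw [← hVGC, lintegral_union hCmeas Set.disjoint_sdiff_left, hCzero, add_zero]
  rw [hFeq, hFval, hVsplit]

set_option maxHeartbeats 1000000 in
/-- For an injective holomorphic map `ψ : U → ℂ^{2n}` on an open set `U ⊆ ℂ^n`, the
fiber-counting integrals of its coordinatewise real part `L = Re∘ψ` and coordinatewise
imaginary part `A = Im∘ψ` agree: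
`∫_{ℝ^{2n}} #{u ∈ U : L(u) = y} dy = ∫_{ℝ^{2n}} #{u ∈ U : A(u) = θ} dθ`. -/
theorem fiber_counting_integrals_re_eq_im
    (n : ℕ) (U : Set (Fin n → ℂ)) (hU : IsOpen U)
    (ψ : (Fin n → ℂ) → (Fin (2 * n) → ℂ)) (hψ : DifferentiableOn ℂ ψ U)
    (hinj : Set.InjOn ψ U)
    (L A : (Fin n → ℂ) → (Fin (2 * n) → ℝ))
    (hL : ∀ z k, L z k = (ψ z k).re) (hA : ∀ z k, A z k = (ψ z k).im) :
    ∫⁻ y : Fin (2 * n) → ℝ, (({u ∈ U | L u = y}).encard : ℝ≥0∞) ∂volume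
      = ∫⁻ θ : Fin (2 * n) → ℝ, (({u ∈ U | A u = θ}).encard : ℝ≥0∞) ∂volume := by
  classical
  -- identify ℝ^{2n} with ℂ^n
  have hrk : Module.finrank ℝ (Fin n → ℂ) = 2 * n := by
    simp [Module.finrank_pi_fintype, Complex.finrank_real_complex]; ring
  have hfr : Module.finrank ℝ (Fin (2*n) → ℝ) = Module.finrank ℝ (Fin n → ℂ) := by
    rw [hrk]; simp
  set e : (Fin (2*n) → ℝ) ≃L[ℝ] (Fin n → ℂ) :=
    (Classical.choice (FiniteDimensional.nonempty_linearEquiv_of_finrank_eq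
      hfr)).toContinuousLinearEquiv with he
  -- real and imaginary part projections
  set pr : (k : Fin (2*n)) → ((Fin (2*n) → ℂ) →L[ℝ] ℂ) := fun k =>
    ContinuousLinearMap.restrictScalars ℝ
      (ContinuousLinearMap.proj (R := ℂ) (φ := fun _ : Fin (2*n) => ℂ) k) with hpr
  set r : (Fin (2*n) → ℂ) →L[ℝ] (Fin (2*n) → ℝ) :=
    ContinuousLinearMap.pi (fun k => Complex.reCLM.comp (pr k)) with hr
  set s : (Fin (2*n) → ℂ) →L[ℝ] (Fin (2*n) → ℝ) :=
    ContinuousLinearMap.pi (fun k => Complex.imCLM.comp (pr k)) with hs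
  have hrw : ∀ w k, r w k = (w k).re := fun w k => rfl
  have hsw : ∀ w k, s w k = (w k).im := fun w k => rfl
  -- the transported maps
  set V : Set (Fin (2*n) → ℝ) := ⇑e ⁻¹' U with hV
  have hVopen : IsOpen V := hU.preimage e.continuous
  set f : (Fin (2*n) → ℝ) → (Fin (2*n) → ℝ) := fun x => r (ψ (e x)) with hf
  set g : (Fin (2*n) → ℝ) → (Fin (2*n) → ℝ) := fun x => s (ψ (e x)) with hg
  have hLr : ∀ u, L u = r (ψ u) := fun u => funext fun k => by rw [hrw, hL]
  have hAs : ∀ u, A u = s (ψ u) := fun u => funext fun k => by rw [hsw, hA]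
  -- fibers correspond
  have hfibL : ∀ y, ({u ∈ U | L u = y}).encard = ({x ∈ V | f x = y}).encard := by
    intro y
    have h1 : {x ∈ V | f x = y} = ⇑e ⁻¹' {u ∈ U | L u = y} := by
      ext x
      simp only [Set.mem_setOf_eq, Set.mem_preimage, hV, hf]
      rw [hLr (e x)]
    have h2 : {u ∈ U | L u = y} = ⇑e '' {x ∈ V | f x = y} := by
      rw [h1, Set.image_preimage_eq _ e.surjective]
    rw [h2, Function.Injective.encard_image e.injective]
  have hfibA : ∀ y, ({u ∈ U | A u = y}).encard = ({x ∈ V | g x = y}).encard := by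
    intro y
    have h1 : {x ∈ V | g x = y} = ⇑e ⁻¹' {u ∈ U | A u = y} := by
      ext x
      simp only [Set.mem_setOf_eq, Set.mem_preimage, hV, hg]
      rw [hAs (e x)]
    have h2 : {u ∈ U | A u = y} = ⇑e '' {x ∈ V | g x = y} := by
      rw [h1, Set.image_preimage_eq _ e.surjective]
    rw [h2, Function.Injective.encard_image e.injective]
  -- derivatives
  set f' : (Fin (2*n) → ℝ) → ((Fin (2*n) → ℝ) →L[ℝ] (Fin (2*n) → ℝ)) := fun x =>
    r.comp (((fderiv ℂ ψ (e x)).restrictScalars ℝ).comp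
      (e : (Fin (2*n) → ℝ) →L[ℝ] (Fin n → ℂ))) with hf'
  set g' : (Fin (2*n) → ℝ) → ((Fin (2*n) → ℝ) →L[ℝ] (Fin (2*n) → ℝ)) := fun x =>
    s.comp (((fderiv ℂ ψ (e x)).restrictScalars ℝ).comp
      (e : (Fin (2*n) → ℝ) →L[ℝ] (Fin n → ℂ))) with hg'
  have hfd : ∀ x ∈ V, HasFDerivAt f (f' x) x := by
    intro x hx
    have hdiff : DifferentiableAt ℂ ψ (e x) := hψ.differentiableAt (hU.mem_nhds hx)
    have h1 : HasFDerivAt ψ ((fderiv ℂ ψ (e x)).restrictScalars ℝ) (e x) :=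
      hdiff.hasFDerivAt.restrictScalars ℝ
    have h2 : HasFDerivAt (fun x => ψ (e x))
        (((fderiv ℂ ψ (e x)).restrictScalars ℝ).comp
          (e : (Fin (2*n) → ℝ) →L[ℝ] (Fin n → ℂ))) x :=
      h1.comp x ((e : (Fin (2*n) → ℝ) →L[ℝ] (Fin n → ℂ)).hasFDerivAt)
    exact (r.hasFDerivAt.comp x h2)
  have hgd : ∀ x ∈ V, HasFDerivAt g (g' x) x := by
    intro x hx
    have hdiff : DifferentiableAt ℂ ψ (e x) := hψ.differentiableAt (hU.mem_nhds hx)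
    have h1 : HasFDerivAt ψ ((fderiv ℂ ψ (e x)).restrictScalars ℝ) (e x) :=
      hdiff.hasFDerivAt.restrictScalars ℝ
    have h2 : HasFDerivAt (fun x => ψ (e x))
        (((fderiv ℂ ψ (e x)).restrictScalars ℝ).comp
          (e : (Fin (2*n) → ℝ) →L[ℝ] (Fin n → ℂ))) x :=
      h1.comp x ((e : (Fin (2*n) → ℝ) →L[ℝ] (Fin n → ℂ)).hasFDerivAt)
    exact (s.hasFDerivAt.comp x h2)
  -- multiplication by -i
  set mI : (Fin n → ℂ) →L[ℝ] (Fin n → ℂ) :=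
    ContinuousLinearMap.restrictScalars ℝ
      ((-Complex.I) • ContinuousLinearMap.id ℂ (Fin n → ℂ)) with hmI
  set M : (Fin (2*n) → ℝ) →L[ℝ] (Fin (2*n) → ℝ) :=
    (e.symm : (Fin n → ℂ) →L[ℝ] (Fin (2*n) → ℝ)).comp
      (mI.comp (e : (Fin (2*n) → ℝ) →L[ℝ] (Fin n → ℂ))) with hM
  have hg'f' : ∀ x, g' x = (f' x).comp M := by
    intro x
    refine ContinuousLinearMap.ext fun v => ?_
    funext k
    show ((fderiv ℂ ψ (e x)) (e v) k).im
      = ((fderiv ℂ ψ (e x)) (e (e.symm ((-Complex.I) • (e v)))) k).re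
    rw [e.apply_symm_apply, _root_.map_smul]
    simp [Complex.mul_re]
  -- determinant of M
  have hMdet : |LinearMap.det (M : (Fin (2*n) → ℝ) →ₗ[ℝ] (Fin (2*n) → ℝ))| = 1 := by
    set ml : (Fin n → ℂ) →ₗ[ℝ] (Fin n → ℂ) := (mI : (Fin n → ℂ) →ₗ[ℝ] (Fin n → ℂ)) with hml
    have hconj : LinearMap.det (M : (Fin (2*n) → ℝ) →ₗ[ℝ] (Fin (2*n) → ℝ))
        = LinearMap.det ml := by
      have hMrepr : (M : (Fin (2*n) → ℝ) →ₗ[ℝ] (Fin (2*n) → ℝ))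
          = (e.symm.toLinearEquiv : (Fin n → ℂ) →ₗ[ℝ] (Fin (2*n) → ℝ)) ∘ₗ ml ∘ₗ
            (e.symm.toLinearEquiv.symm : (Fin (2*n) → ℝ) →ₗ[ℝ] (Fin n → ℂ)) := by
        apply LinearMap.ext
        intro v
        rfl
      rw [hMrepr, LinearMap.det_conj ml e.symm.toLinearEquiv]
    have hml2 : ml ∘ₗ ml = (-1 : ℝ) • LinearMap.id := by
      apply LinearMap.ext
      intro v
      show (-Complex.I) • ((-Complex.I) • v) = (-1 : ℝ) • v
      rw [smul_smul]
      have hii : (-Complex.I) * (-Complex.I) = -1 := by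
        rw [neg_mul_neg, Complex.I_mul_I]
      rw [hii]
      funext i
      show (-1 : ℂ) * v i = (-1 : ℝ) • v i
      simp [Complex.real_smul]
    have hd2 : LinearMap.det ml * LinearMap.det ml = 1 := by
      rw [← LinearMap.det_comp, hml2, LinearMap.det_smul, LinearMap.det_id, hrk, mul_one]
      exact Even.neg_one_pow ⟨n, by ring⟩
    rw [hconj]
    generalize hdg : LinearMap.det ml = d at hd2 ⊢
    nlinarith [abs_nonneg d, abs_mul_abs_self d]
  -- the determinants agree
  have hdetEq : ∀ x, |(g' x).det| = |(f' x).det| := by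
    intro x
    rw [hg'f' x]
    have hcomp : ((f' x).comp M).det
        = (f' x).det * LinearMap.det (M : (Fin (2*n) → ℝ) →ₗ[ℝ] (Fin (2*n) → ℝ)) := by
      show LinearMap.det (((f' x).comp M : (Fin (2*n) → ℝ) →L[ℝ] (Fin (2*n) → ℝ)) :
        (Fin (2*n) → ℝ) →ₗ[ℝ] (Fin (2*n) → ℝ)) = _
      exact LinearMap.det_comp ((f' x : (Fin (2*n) → ℝ) →L[ℝ] (Fin (2*n) → ℝ)) :
        (Fin (2*n) → ℝ) →ₗ[ℝ] (Fin (2*n) → ℝ)) (M : (Fin (2*n) → ℝ) →ₗ[ℝ] (Fin (2*n) → ℝ))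
    rw [hcomp, abs_mul, hMdet, mul_one]
  -- conclude via the area formula
  calc ∫⁻ y : Fin (2 * n) → ℝ, (({u ∈ U | L u = y}).encard : ℝ≥0∞) ∂volume
      = ∫⁻ y : Fin (2 * n) → ℝ, (({x ∈ V | f x = y}).encard : ℝ≥0∞) ∂volume :=
        lintegral_congr fun y => by rw [hfibL y]
    _ = ∫⁻ x in V, ENNReal.ofReal |(f' x).det| ∂volume :=
        aux_area_formula (2*n) V hVopen f f' hfd
    _ = ∫⁻ x in V, ENNReal.ofReal |(g' x).det| ∂volume :=
        lintegral_congr_ae (Filter.Eventually.of_forall fun x => by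
          dsimp only
          rw [hdetEq x])
    _ = ∫⁻ y : Fin (2 * n) → ℝ, (({x ∈ V | g x = y}).encard : ℝ≥0∞) ∂volume :=
        (aux_area_formula (2*n) V hVopen g g' hgd).symm
    _ = ∫⁻ θ : Fin (2 * n) → ℝ, (({u ∈ U | A u = θ}).encard : ℝ≥0∞) ∂volume :=
        lintegral_congr fun y => by rw [hfibA y]
end
end
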